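/- Let R be a ring such that 2 is not a unit of R. Then the unit graph G(R) is bipartite if and only if the unit graph G(R/J(R)) is bipartite. -/

import Mathlib

/-- The unit graph of a ring `R`: vertices are elements of `R`, and two distinct
vertices `a` and `b` are adjacent iff `a + b` is a unit of `R`. -/
def unitGraph (R : Type*) [Ring R] : SimpleGraph R where
  Adj a b := a ≠ b ∧ IsUnit (a + b)
  symm := ⟨fun a b ⟨h1, h2⟩ => ⟨h1.symm, add_comm a b ▸ h2⟩⟩
  loopless := ⟨fun _ ⟨h, _⟩ => h rfl⟩

/-- The clique number of a graph, valued in `ℕ∞` to allow infinite cliques. -/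
noncomputable def ecliqueNum {V : Type*} (G : SimpleGraph V) : ℕ∞ :=
  ⨆ s ∈ {s : Set V | G.IsClique s}, s.encard

/-- The independence number of a graph, valued in `ℕ∞`. -/
noncomputable def eindepNum {V : Type*} (G : SimpleGraph V) : ℕ∞ :=
  ⨆ s ∈ {s : Set V | s.Pairwise fun a b => ¬ G.Adj a b}, s.encard

/-- The Jacobson radical of a (not necessarily commutative) ring, as a two-sided ideal:
the intersection of all maximal left ideals. -/
noncomputable def ringJacobson (R : Type*) [Ring R] : TwoSidedIdeal R :=
  (⊥ : TwoSidedIdeal R).jacobson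

/-- The quotient of `R` by its Jacobson radical. -/
abbrev modJacobson (R : Type*) [Ring R] := (ringJacobson R).ringCon.Quotient

/-! The quotient map `π : R → R/J(R)` reflects units, since an element whose image is invertible
has a left and a right inverse modulo `J(R)`, and `1 + J(R)` consists of units. Hence any section
of `π` embeds `G(R/J(R))` into `G(R)` as a graph homomorphism. Conversely `π` itself is a graph
homomorphism `G(R) → G(R/J(R))`: adjacent `a, b` with `π a = π b` would make `2 π b`, hence `2`,
a unit of `R/J(R)` and therefore of `R`. A 2-colouring pulls back along either homomorphism. -/

lemma isUnit_of_isUnit_mul_of_isUnit_mul {M : Type*} [Monoid M] {x y : M}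
    (hxy : IsUnit (x * y)) (hyx : IsUnit (y * x)) : IsUnit x := by
  obtain ⟨a, ha⟩ := hxy
  obtain ⟨b, hb⟩ := hyx
  exact isUnit_iff_exists_and_exists.2
    ⟨⟨y * ↑a⁻¹, by rw [← mul_assoc, ← ha, Units.mul_inv]⟩,
     ⟨↑b⁻¹ * y, by rw [mul_assoc, ← hb, Units.inv_mul]⟩⟩

section Jacobson

variable {R : Type*} [Ring R]

lemma exists_mul_eq_one_of_sub_one_mem_jacobson_bot {r : R}
    (h : r - 1 ∈ Ideal.jacobson (⊥ : Ideal R)) : ∃ s, s * r = 1 := by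
  obtain ⟨s, hs⟩ := Ideal.exists_mul_sub_mem_of_sub_one_mem_jacobson r h
  exact ⟨s, sub_eq_zero.1 ((Submodule.mem_bot R).1 hs)⟩

-- Mathlib's `Ideal.isUnit_of_sub_one_mem_jacobson_bot` needs commutativity. Here the left inverse
-- `s` of `r` lies in `1 + J(R)` as well, so it has a left inverse `t`, which forces `t = r`.
lemma isUnit_of_sub_one_mem_jacobson_bot {r : R}
    (h : r - 1 ∈ Ideal.jacobson (⊥ : Ideal R)) : IsUnit r := by
  obtain ⟨s, hsr⟩ := exists_mul_eq_one_of_sub_one_mem_jacobson_bot h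
  have hs : s - 1 ∈ Ideal.jacobson (⊥ : Ideal R) := by
    have : s - 1 = -(s * (r - 1)) := by rw [mul_sub, hsr, mul_one, neg_sub]
    exact this ▸ neg_mem (Ideal.mul_mem_left _ s h)
  obtain ⟨t, hts⟩ := exists_mul_eq_one_of_sub_one_mem_jacobson_bot hs
  exact isUnit_iff_exists.2 ⟨s, by rwa [← left_inv_eq_right_inv hts hsr], hsr⟩

theorem isLocalHom_of_surjective_of_ker_le_jacobson {S : Type*} [Ring S] (f : R →+* S)
    (hf : Function.Surjective f) (hker : RingHom.ker f ≤ Ideal.jacobson ⊥) : IsLocalHom f := by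
  refine ⟨fun x ⟨u, hu⟩ => ?_⟩
  obtain ⟨y, hy⟩ := hf ↑u⁻¹
  have isUnit_of_map_eq_one (z : R) (hz : f z = 1) : IsUnit z :=
    isUnit_of_sub_one_mem_jacobson_bot (hker (by simp [hz]))
  exact isUnit_of_isUnit_mul_of_isUnit_mul
    (isUnit_of_map_eq_one _ (by rw [map_mul, hy, ← hu, Units.mul_inv]))
    (isUnit_of_map_eq_one _ (by rw [map_mul, hy, ← hu, Units.inv_mul]))

lemma mem_ringJacobson_iff {x : R} : x ∈ ringJacobson R ↔ x ∈ Ideal.jacobson (⊥ : Ideal R) := by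
  simp [ringJacobson, TwoSidedIdeal.jacobson]

instance : IsLocalHom (ringJacobson R).ringCon.mk' :=
  isLocalHom_of_surjective_of_ker_le_jacobson _ (RingCon.mk'_surjective _) fun _ hx =>
    mem_ringJacobson_iff.1 <| TwoSidedIdeal.ker_ringCon_mk' (ringJacobson R) ▸
      (TwoSidedIdeal.mem_ker _).2 (RingHom.mem_ker.1 hx)

end Jacobson

section UnitGraph

variable {R S : Type*} [Ring R] [Ring S]

def unitGraphHomOfNotIsUnitTwo (f : R →+* S) (h2 : ¬IsUnit (2 : S)) :
    unitGraph R →g unitGraph S where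
  toFun := f
  map_rel' := by
    rintro a b ⟨-, hab⟩
    have hfab : IsUnit (f a + f b) := map_add f a b ▸ hab.map f
    refine ⟨fun h => h2 ?_, hfab⟩
    rw [h, ← two_mul] at hfab
    exact ((Nat.cast_commute 2 (f b)).isUnit_mul_iff.1 hfab).1

def unitGraphHomOfRightInverse (f : R →+* S) [IsLocalHom f] {g : S → R}
    (hg : Function.RightInverse g f) : unitGraph S →g unitGraph R where
  toFun := g
  map_rel' := by
    rintro x y ⟨hxy, hu⟩
    refine ⟨hg.injective.ne hxy, (isUnit_map_iff f _).1 ?_⟩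
    rwa [map_add, hg x, hg y]

end UnitGraph

/-- If `2` is not a unit of `R`, then the unit graph `G(R)` is bipartite iff the unit
graph of `R/J(R)` is bipartite. -/
theorem unitGraph_bipartite_iff_modJacobson (R : Type*) [Ring R]
    (h2 : ¬ IsUnit (2 : R)) :
    (unitGraph R).Colorable 2 ↔ (unitGraph (modJacobson R)).Colorable 2 := by
  set π := (ringJacobson R).ringCon.mk'
  have h2' : ¬IsUnit (2 : modJacobson R) := by rwa [← map_ofNat π 2, isUnit_map_iff]
  exact ⟨fun h => h.of_hom (unitGraphHomOfRightInverse π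
      (Function.rightInverse_surjInv (RingCon.mk'_surjective _))),
    fun h => h.of_hom (unitGraphHomOfNotIsUnitTwo π h2')⟩
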